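/- Let K, N ≥ 1 be integers, set c = 1/√(K/N + 1), and let A be an m×n real matrix with unit Euclidean norm columns satisfying the restricted isometry property of order NK+1 with constant δ < c. Let x ∈ ℝⁿ have support T with |T| ≤ K, let ε ≥ 0, let e ∈ ℝᵐ satisfy ‖e‖₂ ≤ ε, and suppose every nonzero component of x satisfies |xᵢ| > (2√K · ε · c)/(c − δ). Set y = Ax + e. Then for every index set Λ ⊆ {1,…,n} with T \ Λ ≠ ∅ and |T ∪ Λ| + N ≤ NK + 1, and every set W ⊆ {1,…,n} with |W| = N and W ∩ (T ∪ Λ) = ∅, the residual r = y − P_Λ(y) satisfies max_{i∈T\Λ} |⟨Aeᵢ, r⟩| > min_{i∈W} |⟨Aeᵢ, r⟩|. (Consequently, the generalized orthogonal matching pursuit algorithm with stopping rule ‖r‖₂ ≤ ε selects at least one correct index in every iteration and recovers the correct support of x.) -/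

import Mathlib

open scoped InnerProductSpace BigOperators

/-- Regard a plain vector in `Fin m → ℝ` as an element of Euclidean space
(so that `‖·‖` is the Euclidean norm and `⟪·,·⟫_ℝ` the Euclidean inner product). -/
noncomputable def toE {m : ℕ} (v : Fin m → ℝ) : EuclideanSpace ℝ (Fin m) := WithLp.toLp 2 v

/-- The `j`-th column of the matrix `A`, viewed as a vector in Euclidean space. -/
noncomputable def col {m n : ℕ} (A : Matrix (Fin m) (Fin n) ℝ) (j : Fin n) :
    EuclideanSpace ℝ (Fin m) := WithLp.toLp 2 (fun i => A i j)

/-- The number of nonzero entries of a vector. -/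
noncomputable def sparsity {n : ℕ} (z : Fin n → ℝ) : ℕ :=
  (Finset.univ.filter (fun i => z i ≠ 0)).card

/-- `A` satisfies the restricted isometry property of order `s` with constant `δ`:
`(1−δ)‖z‖₂² ≤ ‖Az‖₂² ≤ (1+δ)‖z‖₂²` for every vector `z` with at most `s` nonzero entries. -/
def RIP {m n : ℕ} (A : Matrix (Fin m) (Fin n) ℝ) (s : ℕ) (δ : ℝ) : Prop :=
  ∀ z : Fin n → ℝ, sparsity z ≤ s →
    (1 - δ) * ‖toE z‖ ^ 2 ≤ ‖toE (A.mulVec z)‖ ^ 2 ∧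
    ‖toE (A.mulVec z)‖ ^ 2 ≤ (1 + δ) * ‖toE z‖ ^ 2

/-- Orthogonal projection of `ℝᵐ` onto the span of the columns of `A` indexed by `Λ`. -/
noncomputable def projSpan {m n : ℕ} (A : Matrix (Fin m) (Fin n) ℝ) (Λ : Finset (Fin n))
    (v : EuclideanSpace ℝ (Fin m)) : EuclideanSpace ℝ (Fin m) :=
  Submodule.orthogonalProjectionOnto (Submodule.span ℝ ((fun j => col A j) '' (Λ : Set (Fin n)))) v

/-!
Write `S = T \ Λ`. The noiseless residual `Ax - P_Λ(Ax)` equals `Az` for a vector `z` that agrees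
with `x` on `S`, is supported on `S ∪ Λ`, and whose correlations `qᵢ = ⟨aᵢ, Az⟩` vanish on `Λ`.
On `Ω = S ∪ Λ ∪ W` the polarised RIP gives `‖(q - z)|_Ω‖ ≤ δ ‖z‖`, hence
`‖(q - x)|_S‖² + ‖q|_W‖² ≤ δ² ‖x|_S‖²`. Cauchy–Schwarz turns this into a lower bound on
`max_S |q|` and an upper bound on `min_W |q|`, whose difference exceeds `2ε` precisely under the
minimum-magnitude condition on `x`. Finally the noise moves every correlation by at most
`‖e‖ ≤ ε`, because the columns have unit norm and `I - P_Λ` is a contraction.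
-/

open Finset Function
open scoped Matrix

section Coordinates

variable {m n : ℕ}

@[simp] lemma toE_add (u v : Fin m → ℝ) : toE (u + v) = toE u + toE v := rfl

@[simp] lemma toE_sub (u v : Fin m → ℝ) : toE (u - v) = toE u - toE v := rfl

@[simp] lemma toE_smul (c : ℝ) (u : Fin m → ℝ) : toE (c • u) = c • toE u := rfl

lemma inner_toE (u v : Fin m → ℝ) : ⟪toE u, toE v⟫_ℝ = ∑ i, u i * v i := by
  simp [toE, PiLp.inner_apply, mul_comm]

lemma norm_toE_sq (u : Fin m → ℝ) : ‖toE u‖ ^ 2 = ∑ i, u i ^ 2 := by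
  rw [← real_inner_self_eq_norm_sq, inner_toE]
  simp only [sq]

lemma toE_mulVec (A : Matrix (Fin m) (Fin n) ℝ) (v : Fin n → ℝ) :
    toE (A *ᵥ v) = ∑ i, v i • col A i := by
  ext j
  simp [toE, col, Matrix.mulVec, dotProduct, mul_comm]

lemma inner_toE_mulVec_left (A : Matrix (Fin m) (Fin n) ℝ) (v : Fin n → ℝ)
    (w : EuclideanSpace ℝ (Fin m)) : ⟪toE (A *ᵥ v), w⟫_ℝ = ∑ i, v i * ⟪col A i, w⟫_ℝ := by
  simp [toE_mulVec, sum_inner, real_inner_smul_left]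

lemma sparsity_le_card {z : Fin n → ℝ} {Ω : Finset (Fin n)} (hz : support z ⊆ Ω) :
    sparsity z ≤ #Ω :=
  card_le_card fun _ hi => hz (mem_filter.mp hi).2

end Coordinates

section RIP

variable {m n s : ℕ} {A : Matrix (Fin m) (Fin n) ℝ} {δ : ℝ}

lemma RIP.inner_sub_inner_le_half (h : RIP A s δ) {Ω : Finset (Fin n)} (hΩ : #Ω ≤ s)
    {u v : Fin n → ℝ} (hu : support u ⊆ Ω) (hv : support v ⊆ Ω) :
    ⟪toE (A *ᵥ u), toE (A *ᵥ v)⟫_ℝ - ⟪toE u, toE v⟫_ℝ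
      ≤ δ * (‖toE u‖ ^ 2 + ‖toE v‖ ^ 2) / 2 := by
  have hadd := (h (u + v) ((sparsity_le_card (Ω := Ω)
    ((support_add u v).trans (Set.union_subset hu hv))).trans hΩ)).2
  have hsub := (h (u - v) ((sparsity_le_card (Ω := Ω)
    ((support_sub u v).trans (Set.union_subset hu hv))).trans hΩ)).1
  simp only [Matrix.mulVec_add, Matrix.mulVec_sub, toE_add, toE_sub, norm_add_sq_real,
    norm_sub_sq_real] at hadd hsub
  linarith

lemma RIP.inner_sub_inner_le (h : RIP A s δ) {Ω : Finset (Fin n)} (hΩ : #Ω ≤ s)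
    {u v : Fin n → ℝ} (hu : support u ⊆ Ω) (hv : support v ⊆ Ω) :
    ⟪toE (A *ᵥ u), toE (A *ᵥ v)⟫_ℝ - ⟪toE u, toE v⟫_ℝ ≤ δ * (‖toE u‖ * ‖toE v‖) := by
  rcases eq_or_ne u 0 with rfl | hu0
  · simp [toE]
  rcases eq_or_ne v 0 with rfl | hv0
  · simp [toE]
  set a := ‖toE u‖
  set b := ‖toE v‖
  have ha : 0 < a := norm_pos_iff.mpr (by simpa [toE] using hu0)
  have hb : 0 < b := norm_pos_iff.mpr (by simpa [toE] using hv0)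
  -- rescaling to `b • u` and `a • v`, of equal norm `a b`, makes the half-sum bound sharp
  have key := h.inner_sub_inner_le_half hΩ ((support_const_smul_subset b u).trans hu)
    ((support_const_smul_subset a v).trans hv)
  simp only [Matrix.mulVec_smul, toE_smul, real_inner_smul_left,
    real_inner_smul_right, norm_smul, Real.norm_of_nonneg ha.le, Real.norm_of_nonneg hb.le] at key
  refine le_of_mul_le_mul_left ?_ (mul_pos ha hb)
  linarith

lemma RIP.sum_sq_inner_col_sub_le (h : RIP A s δ) {Ω : Finset (Fin n)} (hΩ : #Ω ≤ s)
    {z : Fin n → ℝ} (hz : support z ⊆ Ω) :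
    ∑ i ∈ Ω, (⟪col A i, toE (A *ᵥ z)⟫_ℝ - z i) ^ 2 ≤ δ ^ 2 * ∑ i ∈ Ω, z i ^ 2 := by
  classical
  set q := fun i => ⟪col A i, toE (A *ᵥ z)⟫_ℝ
  set g : Fin n → ℝ := fun i => if i ∈ Ω then q i - z i else 0
  have hg : support g ⊆ Ω := support_subset_iff'.mpr fun i hi => if_neg hi
  have hz_sq : ‖toE z‖ ^ 2 = ∑ i ∈ Ω, z i ^ 2 := by
    rw [norm_toE_sq]
    refine (sum_subset (subset_univ Ω) fun i _ hi => ?_).symm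
    simp [notMem_support.mp fun h => hi (hz h)]
  -- pairing `AᵀAz - z` with its own restriction `g` turns the bilinear RIP bound into `‖g‖ ≤ δ ‖z‖`
  have hg_sq : ‖toE g‖ ^ 2 = ⟪toE (A *ᵥ g), toE (A *ᵥ z)⟫_ℝ - ⟪toE g, toE z⟫_ℝ := by
    rw [norm_toE_sq, inner_toE_mulVec_left, inner_toE, ← sum_sub_distrib]
    refine sum_congr rfl fun i _ => ?_
    by_cases hi : i ∈ Ω
    · simp only [g, q, hi, if_true]
      ring
    · simp [g, hi]
  have hG := h.inner_sub_inner_le hΩ hg hz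
  rw [← hg_sq] at hG
  have hg_sum : ‖toE g‖ ^ 2 = ∑ i ∈ Ω, (q i - z i) ^ 2 := by
    rw [norm_toE_sq, ← sum_subset (subset_univ Ω) fun i _ hi => by simp [g, hi]]
    exact sum_congr rfl fun i hi => by simp [g, hi]
  rw [← hg_sum, ← hz_sq]
  nlinarith [sq_nonneg (‖toE g‖ - δ * ‖toE z‖), norm_nonneg (toE g)]

lemma RIP.sum_sq_add_sum_sq_le (h : RIP A s δ) (hδ : |δ| ≤ 1) {S Λ W : Finset (Fin n)}
    (hSΛ : Disjoint S Λ) (hW : Disjoint W (S ∪ Λ)) (hcard : #(S ∪ Λ) + #W ≤ s)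
    {z : Fin n → ℝ} (hz : support z ⊆ ↑(S ∪ Λ))
    (hΛ : ∀ i ∈ Λ, ⟪col A i, toE (A *ᵥ z)⟫_ℝ = 0) :
    ∑ i ∈ S, (⟪col A i, toE (A *ᵥ z)⟫_ℝ - z i) ^ 2 + ∑ i ∈ W, ⟪col A i, toE (A *ᵥ z)⟫_ℝ ^ 2
      ≤ δ ^ 2 * ∑ i ∈ S, z i ^ 2 := by
  have hzW : ∀ i ∈ W, z i = 0 := fun i hi =>
    notMem_support.mp fun h => disjoint_left.mp hW hi (hz h)
  have key := h.sum_sq_inner_col_sub_le (Ω := S ∪ Λ ∪ W)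
    (by rwa [card_union_of_disjoint hW.symm]) (hz.trans (by simp [Set.subset_def]; tauto))
  have hΛsum : ∑ i ∈ Λ, (⟪col A i, toE (A *ᵥ z)⟫_ℝ - z i) ^ 2 = ∑ i ∈ Λ, z i ^ 2 :=
    sum_congr rfl fun i hi => by rw [hΛ i hi, zero_sub, neg_sq]
  have hWsum : ∑ i ∈ W, (⟪col A i, toE (A *ᵥ z)⟫_ℝ - z i) ^ 2
      = ∑ i ∈ W, ⟪col A i, toE (A *ᵥ z)⟫_ℝ ^ 2 :=
    sum_congr rfl fun i hi => by rw [hzW i hi, sub_zero]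
  have hWz : ∑ i ∈ W, z i ^ 2 = 0 := sum_eq_zero fun i hi => by rw [hzW i hi, zero_pow two_ne_zero]
  rw [sum_union hW.symm, sum_union hSΛ, sum_union hW.symm, sum_union hSΛ, hΛsum, hWsum, hWz]
    at key
  have hδ2 : δ ^ 2 ≤ 1 := sq_le_one_iff_abs_le_one δ |>.mpr hδ
  nlinarith [mul_le_mul_of_nonneg_right hδ2 (sum_nonneg fun i (_ : i ∈ Λ) => sq_nonneg (z i))]

lemma RIP.nonneg (h : RIP A s δ) (hs : 1 ≤ s) {j : Fin n} (hj : ‖col A j‖ = 1) : 0 ≤ δ := by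
  have hsp : sparsity (Pi.single j (1 : ℝ)) ≤ s :=
    (sparsity_le_card (Ω := {j}) (by simp)).trans (by rwa [card_singleton])
  have key := (h _ hsp).1
  have hAj : toE (A *ᵥ Pi.single j 1) = col A j := by rw [Matrix.mulVec_single_one]; rfl
  have hej : ‖toE (Pi.single j (1 : ℝ))‖ = 1 := by simp [toE]
  rw [hAj, hj, hej] at key
  linarith

end RIP

section Scalar
variable {ι : Type*}

lemma mul_add_mul_le_sqrt_mul_sqrt (a b c d : ℝ) :
    a * c + b * d ≤ √(a ^ 2 + b ^ 2) * √(c ^ 2 + d ^ 2) := by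
  simpa [Fin.sum_univ_two] using Real.sum_mul_le_sqrt_mul_sqrt univ ![a, b] ![c, d]

lemma sqrt_sum_sq_sub_sqrt_sum_sq_sub_le (S : Finset ι) (x q : ι → ℝ) {α : ℝ} (hα : 0 ≤ α)
    (hq : ∀ i ∈ S, |q i| ≤ α) :
    √(∑ i ∈ S, x i ^ 2) - √(∑ i ∈ S, (q i - x i) ^ 2) ≤ α * √(#S : ℝ) := by
  set X := √(∑ i ∈ S, x i ^ 2)
  set H := √(∑ i ∈ S, (q i - x i) ^ 2)
  have hX : X ^ 2 = ∑ i ∈ S, x i ^ 2 := Real.sq_sqrt (sum_nonneg fun i _ => sq_nonneg _)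
  have hupper : ∑ i ∈ S, x i * q i ≤ α * √(#S : ℝ) * X := calc
    ∑ i ∈ S, x i * q i ≤ ∑ i ∈ S, α * |x i| := sum_le_sum fun i hi => by
      rw [mul_comm α]
      exact (le_abs_self _).trans ((abs_mul _ _).trans_le
        (mul_le_mul_of_nonneg_left (hq i hi) (abs_nonneg _)))
    _ = α * ∑ i ∈ S, 1 * |x i| := by simp [mul_sum]
    _ ≤ α * (√(#S : ℝ) * X) := by
      gcongr
      simpa using Real.sum_mul_le_sqrt_mul_sqrt S (fun _ => 1) (fun i => |x i|)
    _ = α * √(#S : ℝ) * X := by ring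
  have hlower : X ^ 2 - X * H ≤ ∑ i ∈ S, x i * q i := by
    have := Real.sum_mul_le_sqrt_mul_sqrt S (fun i => -x i) (fun i => q i - x i)
    simp only [neg_mul, sum_neg_distrib, neg_sq] at this
    have hsplit : ∑ i ∈ S, x i * q i = X ^ 2 + ∑ i ∈ S, x i * (q i - x i) := by
      rw [hX, ← sum_add_distrib]
      exact sum_congr rfl fun i _ => by ring
    linarith
  have hX0 : 0 ≤ X := Real.sqrt_nonneg _
  rcases hX0.eq_or_lt with hX0 | hXpos
  · rw [← hX0, zero_sub]
    exact (neg_nonpos.mpr (Real.sqrt_nonneg _)).trans (by positivity)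
  · nlinarith

lemma mul_sqrt_card_le_sqrt_sum_sq (W : Finset ι) (q : ι → ℝ) {β : ℝ} (hβ : 0 ≤ β)
    (hq : ∀ i ∈ W, β ≤ |q i|) : β * √(#W : ℝ) ≤ √(∑ i ∈ W, q i ^ 2) := by
  rw [← Real.sqrt_sq hβ, ← Real.sqrt_mul (sq_nonneg β), mul_comm, ← nsmul_eq_mul, ← sum_const]
  exact Real.sqrt_le_sqrt (sum_le_sum fun i hi => sq_abs (q i) ▸ pow_le_pow_left₀ hβ (hq i hi) 2)

end Scalar

section Gap
variable {m n s : ℕ} {A : Matrix (Fin m) (Fin n) ℝ} {δ : ℝ}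

lemma RIP.sqrt_sum_sq_mul_le_sup'_sub_inf' (h : RIP A s δ) (hδ0 : 0 ≤ δ) (hδ1 : δ ≤ 1)
    {S Λ W : Finset (Fin n)} (hSΛ : Disjoint S Λ) (hWSΛ : Disjoint W (S ∪ Λ))
    (hcard : #(S ∪ Λ) + #W ≤ s) {z : Fin n → ℝ} (hz : support z ⊆ ↑(S ∪ Λ))
    (hΛ : ∀ i ∈ Λ, ⟪col A i, toE (A *ᵥ z)⟫_ℝ = 0) (hS : S.Nonempty) (hWne : W.Nonempty) :
    √(∑ i ∈ S, z i ^ 2) * (√(#W : ℝ) - δ * √((#W : ℝ) + #S))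
      ≤ (S.sup' hS (fun i => |⟪col A i, toE (A *ᵥ z)⟫_ℝ|)
          - W.inf' hWne (fun i => |⟪col A i, toE (A *ᵥ z)⟫_ℝ|)) * √((#S : ℝ) * #W) := by
  set q := fun i => ⟪col A i, toE (A *ᵥ z)⟫_ℝ
  set α := S.sup' hS (fun i => |q i|)
  set β := W.inf' hWne (fun i => |q i|)
  set X := √(∑ i ∈ S, z i ^ 2)
  set HS := √(∑ i ∈ S, (q i - z i) ^ 2)
  set HW := √(∑ i ∈ W, q i ^ 2)
  have hβ : 0 ≤ β := le_inf' _ _ fun i _ => abs_nonneg _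
  have hα : 0 ≤ α := (abs_nonneg _).trans (le_sup' (fun i => |q i|) hS.choose_spec)
  have hXS : X - HS ≤ α * √(#S : ℝ) :=
    sqrt_sum_sq_sub_sqrt_sum_sq_sub_le S z q hα fun i hi => le_sup' (fun i => |q i|) hi
  have hW : β * √(#W : ℝ) ≤ HW :=
    mul_sqrt_card_le_sqrt_sum_sq W q hβ fun i hi => inf'_le (fun i => |q i|) hi
  have hRIP : HS ^ 2 + HW ^ 2 ≤ (δ * X) ^ 2 := by
    simp only [HS, HW, X, mul_pow, Real.sq_sqrt (sum_nonneg fun _ _ => sq_nonneg _)]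
    exact h.sum_sq_add_sum_sq_le (abs_le.mpr ⟨by linarith, hδ1⟩) hSΛ hWSΛ hcard hz hΛ
  have hmix : HS * √(#W : ℝ) + HW * √(#S : ℝ) ≤ δ * X * √((#W : ℝ) + #S) := by
    refine (mul_add_mul_le_sqrt_mul_sqrt _ _ _ _).trans ?_
    rw [Real.sq_sqrt (Nat.cast_nonneg #W), Real.sq_sqrt (Nat.cast_nonneg #S)]
    gcongr
    exact Real.sqrt_le_iff.mpr ⟨by positivity, hRIP⟩
  rw [Real.sqrt_mul (Nat.cast_nonneg _)]
  nlinarith [mul_le_mul_of_nonneg_right hXS (Real.sqrt_nonneg (#W : ℝ)),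
    mul_le_mul_of_nonneg_right hW (Real.sqrt_nonneg (#S : ℝ))]

end Gap

section Projection
variable {m n : ℕ} (A : Matrix (Fin m) (Fin n) ℝ) (Λ : Finset (Fin n))

lemma projSpan_eq_starProjection (v : EuclideanSpace ℝ (Fin m)) :
    projSpan A Λ v
      = (Submodule.span ℝ ((fun j => col A j) '' (Λ : Set (Fin n)))).starProjection v :=
  rfl

lemma exists_mulVec_eq_sub_projSpan (x : Fin n → ℝ) :
    ∃ z : Fin n → ℝ, toE (A *ᵥ x) - projSpan A Λ (toE (A *ᵥ x)) = toE (A *ᵥ z) ∧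
      ∀ i ∉ Λ, z i = x i := by
  classical
  have hmem : projSpan A Λ (toE (A *ᵥ x))
      ∈ Submodule.span ℝ ((fun j => col A j) '' (Λ : Set (Fin n))) := Submodule.coe_mem _
  obtain ⟨c, hc⟩ := (Submodule.mem_span_image_finset_iff_exists_fun' ℝ).mp hmem
  refine ⟨x - fun i => if i ∈ Λ then c i else 0, ?_, fun i hi => by simp [hi]⟩
  rw [← hc, Matrix.mulVec_sub, toE_sub, toE_mulVec A (fun i => if i ∈ Λ then c i else 0)]
  simp [ite_smul, sum_ite_mem]

lemma inner_col_sub_projSpan_eq_zero {i : Fin n} (hi : i ∈ Λ) (v : EuclideanSpace ℝ (Fin m)) :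
    ⟪col A i, v - projSpan A Λ v⟫_ℝ = 0 :=
  Submodule.inner_right_of_mem_orthogonal
    (K := Submodule.span ℝ ((fun j => col A j) '' (Λ : Set (Fin n))))
    (Submodule.subset_span ⟨i, hi, rfl⟩)
    (Submodule.sub_starProjection_mem_orthogonal v)

lemma norm_sub_projSpan_le (v : EuclideanSpace ℝ (Fin m)) : ‖v - projSpan A Λ v‖ ≤ ‖v‖ := by
  rw [projSpan_eq_starProjection, ← Submodule.starProjection_orthogonal_val]
  exact Submodule.norm_starProjection_apply_le _ v

lemma abs_inner_col_sub_projSpan_add_sub_le {i : Fin n} (hi : ‖col A i‖ = 1)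
    (v e : EuclideanSpace ℝ (Fin m)) :
    |⟪col A i, (v + e) - projSpan A Λ (v + e)⟫_ℝ - ⟪col A i, v - projSpan A Λ v⟫_ℝ| ≤ ‖e‖ := by
  have hres : (v + e) - projSpan A Λ (v + e) - (v - projSpan A Λ v) = e - projSpan A Λ e := by
    simp only [projSpan_eq_starProjection, map_add]
    abel
  rw [← inner_sub_right, hres]
  calc _ ≤ ‖col A i‖ * ‖e - projSpan A Λ e‖ := abs_real_inner_le_norm _ _
    _ ≤ ‖e‖ := by rw [hi, one_mul]; exact norm_sub_projSpan_le A Λ e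

end Projection

lemma Finset.inf'_abs_lt_sup'_abs_of_abs_sub_le {ι : Type*} {S W : Finset ι} (hS : S.Nonempty)
    (hW : W.Nonempty) {f g : ι → ℝ} {ε : ℝ} (hfg : ∀ i, |f i - g i| ≤ ε)
    (hgap : W.inf' hW (fun i => |g i|) + 2 * ε < S.sup' hS (fun i => |g i|)) :
    W.inf' hW (fun i => |f i|) < S.sup' hS (fun i => |f i|) := by
  obtain ⟨j, hj, hj_eq⟩ := W.exists_mem_eq_inf' hW (fun i => |g i|)
  obtain ⟨i, hi, hi_eq⟩ := S.exists_mem_eq_sup' hS (fun i => |g i|)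
  rw [hj_eq, hi_eq] at hgap
  calc W.inf' hW (fun i => |f i|) ≤ |f j| := inf'_le _ hj
    _ ≤ |g j| + ε := by linarith [abs_sub_abs_le_abs_sub (f j) (g j), hfg j]
    _ < |g i| - ε := by linarith
    _ ≤ |f i| := by linarith [abs_sub_abs_le_abs_sub (g i) (f i), abs_sub_comm (f i) (g i), hfg i]
    _ ≤ S.sup' hS (fun i => |f i|) := le_sup' (fun i => |f i|) hi

lemma two_mul_lt_of_mul_sqrt_sub_le {K N t X δ ε g : ℝ} (hN : 0 < N) (ht : 0 < t) (htK : t ≤ K)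
    (hδ0 : 0 ≤ δ) (hδ : δ < 1 / √(K / N + 1)) (hε : 0 ≤ ε)
    (hX : 2 * √K * ε * (1 / √(K / N + 1)) / (1 / √(K / N + 1) - δ) < X)
    (hg : X * (√N - δ * √(N + t)) ≤ g * √(t * N)) : 2 * ε < g := by
  have hK : 0 < K := ht.trans_le htK
  set r := √(K / N + 1)
  have hr : 0 < r := Real.sqrt_pos.mpr (by positivity)
  have hδr : 0 < 1 - δ * r := by
    rw [lt_div_iff₀ hr] at hδ
    linarith
  have hX' : 2 * √K * ε < X * (1 - δ * r) := by
    have : 2 * √K * ε * (1 / r) / (1 / r - δ) = 2 * √K * ε / (1 - δ * r) := by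
      field_simp
    rwa [this, div_lt_iff₀ hδr] at hX
  have hX0 : 0 ≤ X := by
    by_contra hneg
    nlinarith [Real.sqrt_nonneg K]
  have hsqrt : √(N + t) ≤ √N * r := by
    rw [← Real.sqrt_mul hN.le, mul_add, mul_div_cancel₀ _ hN.ne', mul_one]
    exact Real.sqrt_le_sqrt (by linarith)
  have hsqrtK : √t ≤ √K := Real.sqrt_le_sqrt htK
  have hpos : 0 < √t * √N := by positivity
  rw [Real.sqrt_mul ht.le] at hg
  refine lt_of_mul_lt_mul_right ?_ hpos.le
  nlinarith [mul_le_mul_of_nonneg_left hsqrt (mul_nonneg hX0 hδ0), Real.sqrt_nonneg N,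
    mul_lt_mul_of_pos_right hX' (Real.sqrt_pos.mpr hN), mul_le_mul_of_nonneg_right hsqrtK
      (mul_nonneg hε (Real.sqrt_nonneg N))]

theorem stmt13_general {m n : ℕ} (K N : ℕ) (hN : 1 ≤ N)
    (A : Matrix (Fin m) (Fin n) ℝ) (hcol : ∀ j, ‖col A j‖ = 1)
    (δ : ℝ) (hδ : δ < 1 / Real.sqrt ((K : ℝ) / N + 1))
    (hRIP : RIP A (N * K + 1) δ)
    (x : Fin n → ℝ) (T : Finset (Fin n)) (hT : ∀ i, i ∈ T ↔ x i ≠ 0) (hTK : T.card ≤ K)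
    (ε : ℝ) (hε : 0 ≤ ε) (e : EuclideanSpace ℝ (Fin m)) (he : ‖e‖ ≤ ε)
    (hxmin : ∀ i, x i ≠ 0 →
      2 * Real.sqrt K * ε * (1 / Real.sqrt ((K : ℝ) / N + 1))
          / (1 / Real.sqrt ((K : ℝ) / N + 1) - δ) < |x i|)
    (Λ : Finset (Fin n)) (hTΛ : (T \ Λ).Nonempty)
    (hcard : (T ∪ Λ).card + N ≤ N * K + 1)
    (W : Finset (Fin n)) (hWcard : W.card = N) (hWne : W.Nonempty)
    (hWdis : Disjoint W (T ∪ Λ)) :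
    W.inf' hWne (fun i =>
        |⟪col A i, (toE (A.mulVec x) + e)
            - projSpan A Λ (toE (A.mulVec x) + e)⟫_ℝ|)
      < (T \ Λ).sup' hTΛ (fun i =>
        |⟪col A i, (toE (A.mulVec x) + e)
            - projSpan A Λ (toE (A.mulVec x) + e)⟫_ℝ|) := by
  obtain ⟨z, hz_res, hz_eq⟩ := exists_mulVec_eq_sub_projSpan A Λ x
  obtain ⟨i₀, hi₀⟩ := id hTΛ
  have hzS : ∀ i ∈ T \ Λ, z i = x i := fun i hi => hz_eq i (mem_sdiff.mp hi).2
  have hz : support z ⊆ ↑(T \ Λ ∪ Λ) := fun i hi => by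
    by_cases hiΛ : i ∈ Λ
    · exact mem_union_right _ hiΛ
    · exact mem_union_left _ (mem_sdiff.mpr ⟨(hT i).mpr (hz_eq i hiΛ ▸ hi), hiΛ⟩)
  have hδ0 : 0 ≤ δ := hRIP.nonneg (by omega) (hcol i₀)
  have hδ1 : δ ≤ 1 := hδ.le.trans
    (div_le_one_of_le₀ (Real.one_le_sqrt.mpr (le_add_of_nonneg_left (by positivity)))
      (Real.sqrt_nonneg _))
  have hgap := hRIP.sqrt_sum_sq_mul_le_sup'_sub_inf' hδ0 hδ1 sdiff_disjoint
    (by rwa [sdiff_union_self_eq_union]) (by rwa [sdiff_union_self_eq_union, hWcard]) hz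
    (fun i hi => hz_res ▸ inner_col_sub_projSpan_eq_zero A Λ hi _) hTΛ hWne
  have hx₀ : |x i₀| ≤ √(∑ i ∈ T \ Λ, z i ^ 2) :=
    Real.abs_le_sqrt (hzS i₀ hi₀ ▸ single_le_sum (fun i _ => sq_nonneg (z i)) hi₀)
  rw [hWcard] at hgap
  have h2ε := two_mul_lt_of_mul_sqrt_sub_le (by exact_mod_cast hN)
    (by exact_mod_cast card_pos.mpr ⟨i₀, hi₀⟩)
    (by exact_mod_cast (card_le_card sdiff_subset).trans hTK) hδ0 hδ hε
    ((hxmin i₀ ((hT i₀).mp (mem_sdiff.mp hi₀).1)).trans_le hx₀) hgap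
  refine inf'_abs_lt_sup'_abs_of_abs_sub_le _ _ (ε := ε)
    (g := fun i => ⟪col A i, toE (A *ᵥ z)⟫_ℝ) (fun i => ?_) (by linarith)
  rw [← hz_res]
  exact (abs_inner_col_sub_projSpan_add_sub_le A Λ (hcol i) _ e).trans he

/-- Theorem 5 of Chen–Ge (noisy case, per-iteration guarantee): let `c = 1/√(K/N+1)`.
If `A` has unit-norm columns and satisfies the RIP of order `NK+1` with constant `δ < c`,
`x` has support `T` with `|T| ≤ K`, `‖e‖₂ ≤ ε`, every nonzero component of `x` exceeds
`2√K ε c / (c − δ)` in magnitude, and `y = Ax + e`, then for any `Λ` with `T \ Λ ≠ ∅` and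
`|T ∪ Λ| + N ≤ NK+1`, and any `W` of size `N` disjoint from `T ∪ Λ`, the residual
`r = y − P_Λ(y)` satisfies `max_{i∈T\Λ} |⟨Aeᵢ, r⟩| > min_{i∈W} |⟨Aeᵢ, r⟩|`. -/
theorem stmt13 {m n : ℕ} (K N : ℕ) (hK : 1 ≤ K) (hN : 1 ≤ N)
    (A : Matrix (Fin m) (Fin n) ℝ) (hcol : ∀ j, ‖col A j‖ = 1)
    (δ : ℝ) (hδ : δ < 1 / Real.sqrt ((K : ℝ) / N + 1))
    (hRIP : RIP A (N * K + 1) δ)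
    (x : Fin n → ℝ) (T : Finset (Fin n)) (hT : ∀ i, i ∈ T ↔ x i ≠ 0) (hTK : T.card ≤ K)
    (ε : ℝ) (hε : 0 ≤ ε) (e : EuclideanSpace ℝ (Fin m)) (he : ‖e‖ ≤ ε)
    (hxmin : ∀ i, x i ≠ 0 →
      2 * Real.sqrt K * ε * (1 / Real.sqrt ((K : ℝ) / N + 1))
          / (1 / Real.sqrt ((K : ℝ) / N + 1) - δ) < |x i|)
    (Λ : Finset (Fin n)) (hTΛ : (T \ Λ).Nonempty)
    (hcard : (T ∪ Λ).card + N ≤ N * K + 1)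
    (W : Finset (Fin n)) (hWcard : W.card = N) (hWne : W.Nonempty)
    (hWdis : Disjoint W (T ∪ Λ)) :
    W.inf' hWne (fun i =>
        |⟪col A i, (toE (A.mulVec x) + e)
            - projSpan A Λ (toE (A.mulVec x) + e)⟫_ℝ|)
      < (T \ Λ).sup' hTΛ (fun i =>
        |⟪col A i, (toE (A.mulVec x) + e)
            - projSpan A Λ (toE (A.mulVec x) + e)⟫_ℝ|) :=
  stmt13_general K N hN A hcol δ hδ hRIP x T hT hTK ε hε e he hxmin Λ hTΛ hcard W hWcard hWne hWdis
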